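/- Every indecomposable tournament of cardinality at least 5 admits an indecomposable subtournament on exactly 5 vertices. -/

import Mathlib

/-!
An indecomposable tournament on at least three vertices contains a 3-cycle `X = {a, b, c}`,
and every vertex outside `X` either relates uniformly to `X` or lies in some `X(u)`, the set
of `x` for which `{u, x}` is an interval of `X ∪ {x}`. For `x ∈ X(u)`, any `z ∉ X ∪ X(u)`
separating `u` from `x` makes `X ∪ {x, z}` indecomposable. So if no such five-vertex extension
of `X` is indecomposable, no vertex separates `u` from `X(u)`: `{u} ∪ X(u)` is an interval of
the whole tournament, hence `X(u)` is empty for every `u`, and then `X` itself is a nontrivial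
interval.
-/

/-- A tournament on vertex type `V`, given by its arc relation. -/
def IsTournament {V : Type*} (r : V → V → Prop) : Prop :=
  (∀ x, ¬ r x x) ∧ ∀ x y : V, x ≠ y → (r x y ↔ ¬ r y x)

/-- `I` is an interval of the subtournament of `r` induced on `X`. -/
def IsIntervalOn {V : Type*} (r : V → V → Prop) (X I : Set V) : Prop :=
  I ⊆ X ∧ ∀ x ∈ X \ I, (∀ i ∈ I, r x i) ∨ (∀ i ∈ I, r i x)

/-- The subtournament induced on `X` is indecomposable: all its intervals are trivial. -/
def IndecomposableOn {V : Type*} (r : V → V → Prop) (X : Set V) : Prop :=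
  ∀ I : Set V, IsIntervalOn r X I → I = ∅ ∨ (∃ a, I = {a}) ∨ I = X

/-- The dual tournament, obtained by reversing all arcs. -/
def dual {V : Type*} (r : V → V → Prop) : V → V → Prop := fun x y => r y x

/-- `s` embeds into `r`: `s` is isomorphic to an induced subtournament of `r`. -/
def Embeds {W V : Type*} (s : W → W → Prop) (r : V → V → Prop) : Prop :=
  ∃ f : W → V, Function.Injective f ∧ ∀ a b, s a b ↔ r (f a) (f b)

/-- The 3-cycle C₃. -/
def C3 : ZMod 3 → ZMod 3 → Prop := fun i j => j = i + 1

/-- The critical tournament `T_{2n+1}` on `ZMod (2n+1)`: arc `i → j` iff `j - i ∈ {1,…,n}`. -/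
def Tt (n : ℕ) : ZMod (2*n+1) → ZMod (2*n+1) → Prop :=
  fun i j => (j - i).val ∈ Finset.Icc 1 n

/-- The critical tournament `W_{2n+1}` on `Fin (2n+1)`:
`0 < 1 < ⋯ < 2n-1` and odds → `2n` → evens. -/
def Wt (n : ℕ) : Fin (2*n+1) → Fin (2*n+1) → Prop :=
  fun i j =>
    if i.val = 2*n then j.val % 2 = 0 ∧ j.val ≠ 2*n
    else if j.val = 2*n then i.val % 2 = 1
    else i.val < j.val

/-- The diamond `D₄`: `{0,1,2}` is a 3-cycle and `3 → {0,1,2}`. -/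
def D4 : Fin 4 → Fin 4 → Prop :=
  fun i j => (i = 3 ∧ j ≠ 3) ∨ (i ≠ 3 ∧ j ≠ 3 ∧ j.val = (i.val + 1) % 3)

/-- `U₅`: obtained from `T₅` by reversing the arc inside `{3,4}`. -/
def U5 : ZMod 5 → ZMod 5 → Prop :=
  fun i j =>
    if (i = 3 ∧ j = 4) ∨ (i = 4 ∧ j = 3) then Tt 2 j i else Tt 2 i j

/-- The tournament `F_{n+1}` on `{0,…,n}`: arc `i → j` iff `i+1 < j` or `i = j+1`. -/
def Ft (n : ℕ) : Fin (n+1) → Fin (n+1) → Prop :=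
  fun i j => i.val + 1 < j.val ∨ i.val = j.val + 1

/-- `Ext(X)`: vertices outside `X` extending `X` indecomposably. -/
def ExtSet {V : Type*} (r : V → V → Prop) (X : Set V) : Set V :=
  {x | x ∉ X ∧ IndecomposableOn r (X ∪ {x})}

/-- `[X]`: vertices outside `X` relating uniformly to `X`. -/
def BrSet {V : Type*} (r : V → V → Prop) (X : Set V) : Set V :=
  {x | x ∉ X ∧ ((∀ y ∈ X, r x y) ∨ (∀ y ∈ X, r y x))}

/-- `X(u)`: vertices `x` outside `X` such that `{u,x}` is an interval of `T(X ∪ {x})`. -/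
def XuSet {V : Type*} (r : V → V → Prop) (X : Set V) (u : V) : Set V :=
  {x | x ∉ X ∧ IsIntervalOn r (X ∪ {x}) {u, x}}

section

variable {V : Type*} {r : V → V → Prop} {X I : Set V} {u v x y z : V}

namespace IsTournament

theorem ne_of_rel (h : IsTournament r) (hxy : r x y) : x ≠ y := by
  rintro rfl; exact h.1 x hxy

theorem asymm (h : IsTournament r) (hxy : r x y) : ¬ r y x :=
  (h.2 x y (h.ne_of_rel hxy)).mp hxy

theorem rel_of_not_rel (h : IsTournament r) (hxy : x ≠ y) (hn : ¬ r x y) : r y x :=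
  not_not.mp fun hyx => hn ((h.2 x y hxy).mpr hyx)

theorem rel_iff_rel_iff (h : IsTournament r) {p q : V} (hp : y ≠ p) (hq : y ≠ q) :
    (r p y ↔ r q y) ↔ (r y p ↔ r y q) := by
  rw [h.2 p y hp.symm, h.2 q y hq.symm, not_iff_not]

end IsTournament

theorem Set.exists_mem_ne_ne_of_two_lt_encard (hX : 2 < X.encard) (a b : V) :
    ∃ c ∈ X, c ≠ a ∧ c ≠ b := by
  have : 1 < (X \ {a}).encard := by
    by_contra! h1
    have := (Set.encard_le_encard_sdiff_add_encard X {a}).trans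
      (add_le_add h1 (Set.encard_singleton a).le)
    exact absurd (hX.trans_le this) (by norm_num)
  obtain ⟨c, hc, hcb⟩ := Set.exists_ne_of_one_lt_encard this b
  exact ⟨c, hc.1, hc.2, hcb⟩

theorem isIntervalOn_iff (h : IsTournament r) :
    IsIntervalOn r X I ↔ I ⊆ X ∧ ∀ y ∈ X \ I, ∀ p ∈ I, ∀ q ∈ I, (r y p ↔ r y q) := by
  refine and_congr_right fun _ => forall₂_congr fun y hy => ?_
  constructor
  · rintro (hy | hy) p hp q hq
    · exact iff_of_true (hy p hp) (hy q hq)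
    · exact iff_of_false (h.asymm (hy p hp)) (h.asymm (hy q hq))
  · intro H
    by_cases hI : ∃ p ∈ I, r y p
    · obtain ⟨p, hp, hyp⟩ := hI
      exact Or.inl fun q hq => (H p hp q hq).mp hyp
    · push Not at hI
      exact Or.inr fun q hq => h.rel_of_not_rel (fun e => hy.2 (e ▸ hq)) (hI q hq)

theorem indecomposableOn_iff :
    IndecomposableOn r X ↔ ∀ I, IsIntervalOn r X I → I.Nontrivial → I = X := by
  refine forall₂_congr fun I _ => ?_
  have hsub : I = ∅ ∨ (∃ a, I = {a}) ↔ I.Subsingleton := by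
    refine ⟨?_, Set.Subsingleton.eq_empty_or_singleton⟩
    rintro (rfl | ⟨a, rfl⟩)
    exacts [Set.subsingleton_empty, Set.subsingleton_singleton]
  rw [← or_assoc, hsub, ← Set.not_nontrivial_iff, imp_iff_not_or]

theorem IndecomposableOn.eq_of_isIntervalOn (hX : IndecomposableOn r X)
    (hI : IsIntervalOn r X I) (hu : u ∈ I) (hv : v ∈ I) (huv : u ≠ v) : I = X :=
  indecomposableOn_iff.mp hX I hI ⟨u, hu, v, hv, huv⟩

theorem IsIntervalOn.inter_of_subset {Y : Set V} (hI : IsIntervalOn r Y I) (hXY : X ⊆ Y) :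
    IsIntervalOn r X (I ∩ X) :=
  ⟨Set.inter_subset_right, fun y hy => (hI.2 y ⟨hXY hy.1, fun hyI => hy.2 ⟨hyI, hy.1⟩⟩).imp
    (fun H i hi => H i hi.1) (fun H i hi => H i hi.1)⟩

theorem isIntervalOn_pair_iff (h : IsTournament r) (hu : u ∈ X) (hv : v ∈ X) :
    IsIntervalOn r X {u, v} ↔ ∀ y ∈ X, y ≠ u → y ≠ v → (r y u ↔ r y v) := by
  simp only [isIntervalOn_iff h, Set.insert_subset_iff, Set.singleton_subset_iff, hu, hv,
    true_and, Set.mem_sdiff, Set.mem_insert_iff, Set.mem_singleton_iff, not_or, and_imp]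
  refine forall₂_congr fun y _ => ⟨fun H hyu hyv => H hyu hyv u (.inl rfl) v (.inr rfl),
    fun H hyu hyv p hp q hq => ?_⟩
  rcases hp with rfl | rfl <;> rcases hq with rfl | rfl <;> simp [H hyu hyv]

theorem mem_xuSet_iff (h : IsTournament r) (hu : u ∈ X) :
    x ∈ XuSet r X u ↔ x ∉ X ∧ ∀ y ∈ X, y ≠ u → (r y u ↔ r y x) := by
  refine and_congr_right fun hx => ?_
  rw [isIntervalOn_pair_iff h (Or.inl hu) (Or.inr rfl)]
  exact ⟨fun H y hy hyu => H y (Or.inl hy) hyu (ne_of_mem_of_not_mem hy hx),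
    fun H y hy hyu hyx => H y (hy.resolve_right hyx) hyu⟩

theorem IndecomposableOn.not_isIntervalOn_pair (hX : IndecomposableOn r X) (hX3 : 2 < X.encard)
    (huv : u ≠ v) : ¬ IsIntervalOn r X {u, v} := fun hI => by
  obtain ⟨w, hw, hwu, hwv⟩ := Set.exists_mem_ne_ne_of_two_lt_encard hX3 u v
  have := hX.eq_of_isIntervalOn hI (Set.mem_insert u _) (Set.mem_insert_of_mem u rfl) huv
  rcases (Set.ext_iff.mp this w).mpr hw with rfl | rfl
  exacts [hwu rfl, hwv rfl]

theorem IndecomposableOn.not_isIntervalOn_sdiff_singleton (hX : IndecomposableOn r X)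
    (hX3 : 2 < X.encard) (hu : u ∈ X) : ¬ IsIntervalOn r X (X \ {u}) := fun hI => by
  obtain ⟨p, hp, hpu, -⟩ := Set.exists_mem_ne_ne_of_two_lt_encard hX3 u u
  obtain ⟨q, hq, hqu, hqp⟩ := Set.exists_mem_ne_ne_of_two_lt_encard hX3 u p
  have := hX.eq_of_isIntervalOn hI ⟨hp, hpu⟩ ⟨hq, hqu⟩ hqp.symm
  exact ((Set.ext_iff.mp this u).mpr hu).2 rfl

theorem notMem_brSet_of_mem_xuSet (h : IsTournament r) (hX : IndecomposableOn r X)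
    (hX3 : 2 < X.encard) (hu : u ∈ X) (hx : x ∈ XuSet r X u) : x ∉ BrSet r X := by
  rintro ⟨hxX, hxunif⟩
  obtain ⟨-, hx⟩ := (mem_xuSet_iff h hu).mp hx
  refine hX.not_isIntervalOn_sdiff_singleton hX3 hu ⟨Set.sdiff_subset, fun y hy => ?_⟩
  obtain rfl : y = u := not_not.mp fun hyu => hy.2 ⟨hy.1, hyu⟩
  refine hxunif.imp (fun H i hi => ?_) (fun H i hi => (hx i hi.1 hi.2).mpr (H i hi.1))
  exact ((h.rel_iff_rel_iff hi.2 (ne_of_mem_of_not_mem hi.1 hxX)).mpr (hx i hi.1 hi.2)).mpr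
    (H i hi.1)

theorem IsIntervalOn.mem_of_rel_of_rel (h : IsTournament r) (hI : IsIntervalOn r X I)
    {a b c : V} (ha : a ∈ X) (hb : b ∈ I) (hc : c ∈ I) (hab : r a b) (hca : r c a) : a ∈ I := by
  by_contra haI
  rcases hI.2 a ⟨ha, haI⟩ with H | H
  exacts [h.asymm hca (H c hc), h.asymm hab (H b hb)]

theorem indecomposableOn_cycle (h : IsTournament r) {a b c : V} (hab : r a b) (hbc : r b c)
    (hca : r c a) : IndecomposableOn r {a, b, c} := by
  rw [indecomposableOn_iff]
  rintro I hI ⟨p, hp, q, hq, hpq⟩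
  have hmem : ∀ {w}, w ∈ ({a, b, c} : Set V) ↔ w = a ∨ w = b ∨ w = c := by simp
  have ha : b ∈ I → c ∈ I → a ∈ I := fun h1 h2 =>
    hI.mem_of_rel_of_rel h (hmem.2 (by simp)) h1 h2 hab hca
  have hb : c ∈ I → a ∈ I → b ∈ I := fun h1 h2 =>
    hI.mem_of_rel_of_rel h (hmem.2 (by simp)) h1 h2 hbc hab
  have hc : a ∈ I → b ∈ I → c ∈ I := fun h1 h2 =>
    hI.mem_of_rel_of_rel h (hmem.2 (by simp)) h1 h2 hca hbc
  refine hI.1.antisymm fun w hw => ?_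
  rcases hmem.1 (hI.1 hp) with rfl | rfl | rfl <;> rcases hmem.1 (hI.1 hq) with rfl | rfl | rfl <;>
    rcases hmem.1 hw with rfl | rfl | rfl <;> tauto

theorem IndecomposableOn.exists_cycle (h : IsTournament r) (hX : IndecomposableOn r X)
    (hX3 : 2 < X.encard) (hv : v ∈ X) : ∃ b ∈ X, ∃ c ∈ X, r v b ∧ r b c ∧ r c v := by
  obtain ⟨⟨b, hb, hvb⟩, c, hc, hcv⟩ : (∃ b ∈ X, r v b) ∧ ∃ c ∈ X, r c v := by
    by_contra H
    refine hX.not_isIntervalOn_sdiff_singleton hX3 hv ⟨Set.sdiff_subset, fun y hy => ?_⟩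
    obtain rfl : y = v := not_not.mp fun hyv => hy.2 ⟨hy.1, hyv⟩
    rcases not_and_or.mp H with H | H
    · exact Or.inr fun i hi =>
        h.rel_of_not_rel (fun e => hi.2 e.symm) fun hyi => H ⟨i, hi.1, hyi⟩
    · exact Or.inl fun i hi => h.rel_of_not_rel hi.2 fun hiy => H ⟨i, hi.1, hiy⟩
  by_contra! H
  -- with no 3-cycle through `v`, every in-neighbour of `v` beats every out-neighbour of `v`
  have hint : IsIntervalOn r X (insert v {y ∈ X | r v y}) := by
    refine ⟨Set.insert_subset hv fun _ hy => hy.1, fun w ⟨hw, hwI⟩ => Or.inl ?_⟩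
    have hwv : r w v := h.rel_of_not_rel (fun e => hwI (e ▸ Set.mem_insert v _))
      fun hvw => hwI (Set.mem_insert_of_mem _ ⟨hw, hvw⟩)
    rintro y (rfl | ⟨hy, hvy⟩)
    · exact hwv
    · exact h.rel_of_not_rel (fun e => hwI (e ▸ Set.mem_insert_of_mem _ ⟨hy, hvy⟩))
        fun hyw => H y hy w hw hvy hyw hwv
  have := hX.eq_of_isIntervalOn hint (Set.mem_insert v _) (Set.mem_insert_of_mem _ ⟨hb, hvb⟩)
    (h.ne_of_rel hvb)
  rcases (Set.ext_iff.mp this c).mpr hc with rfl | ⟨-, hvc⟩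
  exacts [h.1 c hcv, h.asymm hvc hcv]

theorem mem_brSet_or_mem_xuSet_of_cycle (h : IsTournament r) {a b c w : V} (hab : r a b)
    (hbc : r b c) (hca : r c a) (hw : w ∉ ({a, b, c} : Set V)) :
    w ∈ BrSet r {a, b, c} ∨ w ∈ XuSet r {a, b, c} a ∨ w ∈ XuSet r {a, b, c} b ∨
      w ∈ XuSet r {a, b, c} c := by
  simp only [BrSet, mem_xuSet_iff h (by simp : a ∈ ({a, b, c} : Set V)),
    mem_xuSet_iff h (by simp : b ∈ ({a, b, c} : Set V)),
    mem_xuSet_iff h (by simp : c ∈ ({a, b, c} : Set V))]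
  simp only [Set.mem_insert_iff, Set.mem_singleton_iff, not_or] at hw
  simp only [Set.mem_insert_iff, Set.mem_singleton_iff, Set.mem_ofPred_eq, forall_eq_or_imp,
    forall_eq, hw, h.2 w a hw.1, h.2 w b hw.2.1, h.2 w c hw.2.2, hab, hbc, hca, h.asymm hab,
    h.asymm hbc, h.asymm hca]
  tauto

theorem IsIntervalOn.eq_union_pair_of_subset (h : IsTournament r) (hX : IndecomposableOn r X)
    (hX3 : 2 < X.encard) (hu : u ∈ X) (hx : x ∈ XuSet r X u) (hsep : ¬ (r z u ↔ r z x))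
    (hI : IsIntervalOn r (X ∪ {x, z}) I) (hXI : X ⊆ I) : I = X ∪ {x, z} := by
  have hxI : x ∈ I := by
    by_contra hxI
    refine notMem_brSet_of_mem_xuSet h hX hX3 hu hx ⟨hx.1, ?_⟩
    exact (hI.2 x ⟨by simp, hxI⟩).imp (fun H i hi => H i (hXI hi)) (fun H i hi => H i (hXI hi))
  have hzI : z ∈ I := by
    by_contra hzI
    exact hsep (((isIntervalOn_iff h).mp hI).2 z ⟨by simp, hzI⟩ u (hXI hu) x hxI)
  exact hI.1.antisymm
    (Set.union_subset hXI (Set.insert_subset hxI (Set.singleton_subset_iff.mpr hzI)))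

theorem IsIntervalOn.notMem_of_subsingleton_inter (h : IsTournament r) (hu : u ∈ X)
    (hzX : z ∉ X) (hz : z ∉ XuSet r X u) (hsep : ¬ (r z u ↔ r z x))
    (hI : IsIntervalOn r (X ∪ {x, z}) I) (hJ : (I ∩ X).Subsingleton) (hIn : I.Nontrivial) :
    u ∉ I := by
  intro huI
  have hXI : ∀ y ∈ X, y ≠ u → y ∉ I := fun y hy hyu hyI => hyu (hJ ⟨hyI, hy⟩ ⟨huI, hu⟩)
  obtain ⟨hIY, hI⟩ := (isIntervalOn_iff h).mp hI
  by_cases hzI : z ∈ I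
  · exact hz ((mem_xuSet_iff h hu).mpr
      ⟨hzX, fun y hy hyu => hI y ⟨Or.inl hy, hXI y hy hyu⟩ u huI z hzI⟩)
  · obtain ⟨q, hq, hqu⟩ := hIn.exists_ne u
    rcases hIY hq with hqX | rfl | rfl
    exacts [hXI q hqX hqu hq, hsep (hI z ⟨by simp, hzI⟩ u huI q hq), hzI hq]

theorem IsIntervalOn.subsingleton_of_subsingleton_inter (h : IsTournament r)
    (hX : IndecomposableOn r X) (hX3 : 2 < X.encard) (hu : u ∈ X) (hx : x ∈ XuSet r X u)
    (hzX : z ∉ X) (hzx : z ≠ x) (hz : z ∉ XuSet r X u) (hsep : ¬ (r z u ↔ r z x))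
    (hI : IsIntervalOn r (X ∪ {x, z}) I) (hJ : (I ∩ X).Subsingleton) : I.Subsingleton := by
  rw [← Set.not_nontrivial_iff]
  intro hIn
  have huI := hI.notMem_of_subsingleton_inter h hu hzX hz hsep hJ hIn
  obtain ⟨hxX, hx⟩ := (mem_xuSet_iff h hu).mp hx
  replace hz : ¬ ∀ y ∈ X, y ≠ u → (r y u ↔ r y z) := fun H =>
    hz ((mem_xuSet_iff h hu).mpr ⟨hzX, H⟩)
  obtain ⟨hIY, hI⟩ := (isIntervalOn_iff h).mp hI
  by_cases hv : ∃ v ∈ X, v ∈ I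
  · obtain ⟨v, hvX, hvI⟩ := hv
    have hXI : ∀ y ∈ X, y ≠ v → y ∉ I := fun y hy hyv hyI => hyv (hJ ⟨hyI, hy⟩ ⟨hvI, hvX⟩)
    have hvu : v ≠ u := ne_of_mem_of_not_mem hvI huI
    have hxI : x ∉ I := fun hxI => hX.not_isIntervalOn_pair hX3 hvu.symm <|
      (isIntervalOn_pair_iff h hu hvX).mpr fun y hy hyu hyv =>
        (hx y hy hyu).trans (hI y ⟨Or.inl hy, hXI y hy hyv⟩ x hxI v hvI)
    have hzI : z ∈ I := by
      by_contra hzI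
      have hIX : I ⊆ X := fun p hp => by
        rcases hIY hp with hpX | rfl | rfl
        exacts [hpX, absurd hp hxI, absurd hp hzI]
      exact hIn.not_subsingleton (Set.inter_eq_left.mpr hIX ▸ hJ)
    have hxvz := hI x ⟨by simp, hxI⟩ v hvI z hzI
    have huvz := hI u ⟨Or.inl hu, huI⟩ v hvI z hzI
    have huxv := (h.rel_iff_rel_iff hvu (ne_of_mem_of_not_mem hvX hxX)).mpr (hx v hvX hvu)
    exact hsep ((h.rel_iff_rel_iff (ne_of_mem_of_not_mem hu hzX).symm hzx).mp
      (huvz.symm.trans (huxv.trans hxvz)))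
  · push Not at hv
    have hxzI : x ∈ I ∧ z ∈ I := by
      obtain ⟨p, hp, q, hq, hpq⟩ := hIn
      rcases hIY hp with hpX | rfl | rfl
      · exact absurd hp (hv p hpX)
      all_goals rcases hIY hq with hqX | rfl | rfl
      all_goals first
        | exact absurd hq (hv q hqX) | exact absurd rfl hpq | exact ⟨hp, hq⟩ | exact ⟨hq, hp⟩
    exact hz fun y hy hyu => (hx y hy hyu).trans (hI y ⟨Or.inl hy, hv y hy⟩ x hxzI.1 z hxzI.2)

theorem indecomposableOn_union_pair (h : IsTournament r) (hX : IndecomposableOn r X)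
    (hX3 : 2 < X.encard) (hu : u ∈ X) (hx : x ∈ XuSet r X u) (hzX : z ∉ X) (hzx : z ≠ x)
    (hz : z ∉ XuSet r X u) (hsep : ¬ (r z u ↔ r z x)) : IndecomposableOn r (X ∪ {x, z}) := by
  rw [indecomposableOn_iff]
  intro I hI hIn
  by_cases hJ : (I ∩ X).Nontrivial
  · refine hI.eq_union_pair_of_subset h hX hX3 hu hx hsep (Set.inter_eq_right.mp ?_)
    exact indecomposableOn_iff.mp hX _ (hI.inter_of_subset Set.subset_union_left) hJ
  · exact absurd (hI.subsingleton_of_subsingleton_inter h hX hX3 hu hx hzX hzx hz hsep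
      (Set.not_nontrivial_iff.mp hJ)) hIn.not_subsingleton

theorem isIntervalOn_insert_xuSet (h : IsTournament r) (hX : IndecomposableOn r X)
    (hX3 : 2 < X.encard) (hu : u ∈ X)
    (hext : ∀ x ∉ X, ∀ z ∉ X, x ≠ z → ¬ IndecomposableOn r (X ∪ {x, z})) :
    IsIntervalOn r Set.univ (insert u (XuSet r X u)) := by
  rw [isIntervalOn_iff h]
  refine ⟨Set.subset_univ _, fun w hw => ?_⟩
  replace hw := hw.2
  suffices H : ∀ p ∈ insert u (XuSet r X u), (r w p ↔ r w u) from
    fun p hp q hq => (H p hp).trans (H q hq).symm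
  have hwu : w ≠ u := fun e => hw (e ▸ Set.mem_insert _ _)
  rintro p (rfl | hp)
  · rfl
  by_cases hwX : w ∈ X
  · exact (((mem_xuSet_iff h hu).mp hp).2 w hwX hwu).symm
  by_contra hsep
  exact hext p hp.1 w hwX (fun e => hw (e ▸ Set.mem_insert_of_mem _ hp))
    (indecomposableOn_union_pair h hX hX3 hu hp hwX
      (fun e => hw (e ▸ Set.mem_insert_of_mem _ hp)) (fun hwS => hw (Set.mem_insert_of_mem _ hwS))
      fun e => hsep e.symm)

theorem xuSet_eq_empty (h : IsTournament r) (hT : IndecomposableOn r Set.univ)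
    (hX : IndecomposableOn r X) (hX3 : 2 < X.encard) (hu : u ∈ X)
    (hext : ∀ x ∉ X, ∀ z ∉ X, x ≠ z → ¬ IndecomposableOn r (X ∪ {x, z})) :
    XuSet r X u = ∅ := by
  refine Set.eq_empty_of_forall_notMem fun x hx => ?_
  obtain ⟨v, hv, hvu, -⟩ := Set.exists_mem_ne_ne_of_two_lt_encard hX3 u u
  have := hT.eq_of_isIntervalOn (isIntervalOn_insert_xuSet h hX hX3 hu hext) (Set.mem_insert u _)
    (Set.mem_insert_of_mem u hx) (ne_of_mem_of_not_mem hu hx.1)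
  rcases (Set.ext_iff.mp this v).mpr trivial with rfl | hv'
  exacts [hvu rfl, hv'.1 hv]

theorem encard_cycle (h : IsTournament r) {a b c : V} (hab : r a b) (hbc : r b c)
    (hca : r c a) : ({a, b, c} : Set V).encard = 3 :=
  Set.encard_eq_three.mpr
    ⟨a, b, c, h.ne_of_rel hab, (h.ne_of_rel hca).symm, h.ne_of_rel hbc, rfl⟩

theorem exists_indecomposableOn_union_pair_of_cycle (h : IsTournament r)
    (hT : IndecomposableOn r Set.univ) {a b c w : V} (hab : r a b) (hbc : r b c) (hca : r c a)
    (hw : w ∉ ({a, b, c} : Set V)) :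
    ∃ x ∉ ({a, b, c} : Set V), ∃ z ∉ ({a, b, c} : Set V), x ≠ z ∧
      IndecomposableOn r ({a, b, c} ∪ {x, z}) := by
  by_contra! hext
  have hX3 : 2 < ({a, b, c} : Set V).encard := by rw [encard_cycle h hab hbc hca]; norm_num
  have hXu u (hu : u ∈ ({a, b, c} : Set V)) :=
    xuSet_eq_empty h hT (indecomposableOn_cycle h hab hbc hca) hX3 hu hext
  have hint : IsIntervalOn r Set.univ {a, b, c} := by
    refine ⟨Set.subset_univ _, fun y hy => ?_⟩
    rcases mem_brSet_or_mem_xuSet_of_cycle h hab hbc hca hy.2 with hBr | hXa | hXa | hXa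
    · exact hBr.2
    all_goals simp [hXu] at hXa
  have := hT.eq_of_isIntervalOn hint (Set.mem_insert a _) (by simp) (h.ne_of_rel hab)
  exact hw (this ▸ Set.mem_univ w)

end

/-- Every indecomposable tournament of cardinality `≥ 5` admits an
indecomposable subtournament on exactly 5 vertices. -/
theorem indecomposable_sub5 {V : Type*} [Fintype V] (r : V → V → Prop)
    (h : IsTournament r) (hcard : 5 ≤ Fintype.card V)
    (hT : IndecomposableOn r Set.univ) :
    ∃ X : Set V, X.ncard = 5 ∧ IndecomposableOn r X := by
  have hV : (5 : ℕ∞) ≤ (Set.univ : Set V).encard := by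
    rw [Set.encard_univ, ENat.card_eq_coe_fintype_card]; exact_mod_cast hcard
  obtain ⟨a⟩ : Nonempty V := Fintype.card_pos_iff.mp (by omega)
  obtain ⟨b, -, c, -, hab, hbc, hca⟩ :=
    hT.exists_cycle h (lt_of_lt_of_le (by norm_num) hV) (Set.mem_univ a)
  have hX3 := encard_cycle h hab hbc hca
  obtain ⟨w, hw⟩ : ∃ w, w ∉ ({a, b, c} : Set V) := by
    by_contra! H
    have := (Set.encard_le_encard (s := Set.univ) fun w _ => H w).trans_eq hX3
    exact absurd (hV.trans this) (by norm_num)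
  obtain ⟨x, hx, z, hz, hxz, hind⟩ :=
    exists_indecomposableOn_union_pair_of_cycle h hT hab hbc hca hw
  refine ⟨_, ?_, hind⟩
  rw [Set.ncard_def, Set.encard_union_eq, hX3, Set.encard_pair hxz]
  · rfl
  · exact Set.disjoint_left.mpr fun p hp hpxz => by rcases hpxz with rfl | rfl <;> contradiction
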